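/- Let X, Y be metric spaces and φ : Y → X a function such that for every very Lipschitz bounded sequence (fₙ) of functions on X, the sequence (fₙ ∘ φ) is a very Lipschitz bounded sequence on Y. Then φ is bornologous: for every R ≥ 0 there exists S ≥ 0 such that d(x,y) ≤ R implies d(φ(x),φ(y)) ≤ S. -/
import Mathlib


/-- A bounded sequence of functions is *very Lipschitz* if for every `L > 0` the
functions are eventually `L`-Lipschitz. -/
def VeryLipschitzSeq {Z : Type*} [MetricSpace Z] (f : ℕ → Z → ℝ) : Prop :=
  ∀ L > (0 : ℝ), ∃ n₀, ∀ n ≥ n₀, ∀ x y, |f n x - f n y| ≤ L * dist x y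

lemma abs_min_sub_min_le (u v c : ℝ) : |min u c - min v c| ≤ |u - v| := by
  have h3 := le_abs_self (u - v)
  have h4 := neg_abs_le (u - v)
  rcases le_total u c with h1 | h1 <;> rcases le_total v c with h2 | h2 <;>
    rw [abs_le] <;> constructor <;>
    simp only [min_eq_left, min_eq_right, h1, h2] <;> linarith

theorem pullback_very_lipschitz_implies_bornologous
    {X Y : Type*} [MetricSpace X] [MetricSpace Y] (φ : Y → X)
    (h : ∀ f : ℕ → X → ℝ, (∃ C : ℝ, ∀ n x, |f n x| ≤ C) →
      (∀ n, Continuous (f n)) → VeryLipschitzSeq f →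
      VeryLipschitzSeq (fun n => f n ∘ φ)) :
    ∀ R ≥ (0 : ℝ), ∃ S ≥ (0 : ℝ), ∀ x y : Y, dist x y ≤ R →
      dist (φ x) (φ y) ≤ S := by
  by_contra hc
  push_neg at hc
  obtain ⟨R, hR, hc⟩ := hc
  choose x y hxy hd using fun n : ℕ => hc (((n : ℝ) + 1) ^ 2) (by positivity)
  set f : ℕ → X → ℝ := fun n z => min (dist z (φ (x n)) / ((n : ℝ) + 1)) 1 with hf
  have hnpos : ∀ n : ℕ, (0 : ℝ) < (n : ℝ) + 1 := fun n => by positivity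
  have hlip : ∀ n (a b : X), |f n a - f n b| ≤ (1 / ((n : ℝ) + 1)) * dist a b := by
    intro n a b
    refine (abs_min_sub_min_le _ _ _).trans ?_
    rw [div_sub_div_same, abs_div, abs_of_pos (hnpos n), div_eq_mul_inv, mul_comm,
      one_div]
    gcongr
    exact abs_dist_sub_le a b (φ (x n))
  have hbdd : ∃ C : ℝ, ∀ n z, |f n z| ≤ C := by
    refine ⟨1, fun n z => ?_⟩
    rw [abs_le]
    constructor
    · have : (0:ℝ) ≤ min (dist z (φ (x n)) / ((n : ℝ) + 1)) 1 :=
        le_min (by positivity) zero_le_one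
      linarith
    · exact min_le_right _ _
  have hcont : ∀ n, Continuous (f n) := fun n =>
    ((continuous_id.dist continuous_const).div_const _).min continuous_const
  have hvl : VeryLipschitzSeq f := by
    intro L hL
    refine ⟨⌈1 / L⌉₊, fun n hn a b => ?_⟩
    refine (hlip n a b).trans ?_
    refine mul_le_mul_of_nonneg_right ?_ dist_nonneg
    rw [div_le_iff₀ (hnpos n)]
    have h1 : 1 / L ≤ (n : ℝ) := (Nat.le_ceil _).trans (by exact_mod_cast hn)
    rw [div_le_iff₀ hL] at h1
    nlinarith
  have hvl' := h f hbdd hcont hvl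
  obtain ⟨n₀, hn₀⟩ := hvl' (1 / (R + 1)) (by positivity)
  have key := hn₀ n₀ le_rfl (y n₀) (x n₀)
  have h0 : f n₀ (φ (x n₀)) = 0 := by
    simp [hf]
  have h1 : f n₀ (φ (y n₀)) = 1 := by
    have hd' := hd n₀
    rw [dist_comm] at hd'
    have : (1 : ℝ) ≤ dist (φ (y n₀)) (φ (x n₀)) / ((n₀ : ℝ) + 1) := by
      rw [le_div_iff₀ (hnpos n₀)]
      nlinarith [hnpos n₀]
    simp [hf, min_eq_right this]
  simp only [Function.comp_apply, h0, h1, sub_zero, abs_one] at key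
  have hRle : dist (y n₀) (x n₀) ≤ R := by rw [dist_comm]; exact hxy n₀
  have : (1 : ℝ) ≤ R / (R + 1) := by
    calc (1:ℝ) ≤ 1 / (R + 1) * dist (y n₀) (x n₀) := key
    _ ≤ 1 / (R + 1) * R := by gcongr
    _ = R / (R + 1) := by ring
  rw [le_div_iff₀ (by positivity : (0:ℝ) < R + 1)] at this
  linarith
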